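/- arXiv:2405.00916 — 3 statements merged into one kernel-verified Lean document; each statement's English description precedes it below -/
import Mathlib

section
/- Let r be a natural number, F a finite set, and φ : (ℕ)^r → F a function. Then there exists a finite subset N ⊆ ℕ^r such that for every (n₁,…,n_r) ∈ ℕ^r there exists (m₁,…,m_r) ∈ N with: φ(m₁,…,m_r) = φ(n₁,…,n_r); m_i ≤ n_i for all i; and m_i > 0 whenever n_i > 0. -/
private def natLtIsWellOrder : IsWellOrder ℕ (· < ·) := inferInstance

private lemma pi_nat_isPWO {r : ℕ} (s : Set (Fin r → ℕ)) : s.IsPWO :=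
  Set.isPWO_of_wellQuasiOrderedLE s

theorem stmt0 (r : ℕ) (F : Type*) [Finite F] (φ : (Fin r → ℕ) → F) :
    ∃ N : Finset (Fin r → ℕ), ∀ n : Fin r → ℕ, ∃ m ∈ N,
      φ m = φ n ∧ (∀ i, m i ≤ n i) ∧ (∀ i, 0 < n i → 0 < m i) := by
  classical
  set key : (Fin r → ℕ) → F × (Fin r → Bool) :=
    fun n => (φ n, fun i => decide (0 < n i)) with hkey
  set M : F × (Fin r → Bool) → Set (Fin r → ℕ) :=
    fun k => {x | key x = k ∧ ∀ y, key y = k → y ≤ x → y = x} with hM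
  have hMfin : ∀ k, (M k).Finite := by
    intro k
    by_contra hinf
    have hinf' : (M k).Infinite := hinf
    have f := hinf'.natEmbedding _
    have hpwo : (Set.univ : Set (Fin r → ℕ)).IsPWO := pi_nat_isPWO _
    obtain ⟨a, b, hab, hle⟩ := hpwo.exists_lt (f := fun n => (f n : Fin r → ℕ)) (fun _ => Set.mem_univ _)
    have h1 := (f a).2
    have h2 := (f b).2
    have : (f a : Fin r → ℕ) = (f b : Fin r → ℕ) :=
      h2.2 _ h1.1 hle
    exact absurd (f.injective (Subtype.ext this)) (Nat.ne_of_lt hab)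
  have hNfin : (⋃ k, M k).Finite := Set.finite_iUnion hMfin
  refine ⟨hNfin.toFinset, fun n => ?_⟩
  -- find a minimal element below n with the same key
  set s : Set (Fin r → ℕ) := {x | key x = key n ∧ x ≤ n} with hs
  have hswf : s.IsWF := (pi_nat_isPWO s).isWF
  have hns : n ∈ s := ⟨rfl, le_refl n⟩
  set m := hswf.min ⟨n, hns⟩ with hm
  have hmmem : m ∈ s := hswf.min_mem _
  have hmin : ∀ y, key y = key n → y ≤ m → y = m := by
    intro y hy hle
    have hys : y ∈ s := ⟨hy, hle.trans hmmem.2⟩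
    have hnlt := hswf.not_lt_min ⟨n, hns⟩ hys
    by_contra hne
    exact hnlt (lt_of_le_of_ne hle hne)
  have hminS : ∀ y, key y = key n → y ≤ m → y = m := hmin
  have hmM : m ∈ M (key n) := ⟨hmmem.1, fun y hy hle => hmin y hy hle⟩
  have hkeq : key m = key n := hmmem.1
  have hφ : φ m = φ n := congrArg Prod.fst hkeq
  have hpat : ∀ i, 0 < n i → 0 < m i := by
    intro i hi
    have := congrArg Prod.snd hkeq
    have := congrFun this i
    simpa [hi] using of_decide_eq_true (this.trans (by simp [hkey, hi]))
  refine ⟨m, ?_, hφ, fun i => hmmem.2 i, hpat⟩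
  rw [Set.Finite.mem_toFinset]
  exact Set.mem_iUnion.mpr ⟨key n, hmM⟩
end

section
/- Let V be a finite-dimensional vector space over a field, and let ρ, λ be linear endomorphisms of V. Suppose there exists n ≥ 1 such that ρ^{n+1} = ρ^n, ker(ρ^n) ∩ ker(λ) = 0, and ρ^n ∘ λ = λ ∘ ρ^n. Then range(ρ) + range(λ) = V. -/
theorem stmt1 {K V : Type*} [Field K] [AddCommGroup V] [Module K V]
    [FiniteDimensional K V] (ρ lam : V →ₗ[K] V) (n : ℕ) (hn : 1 ≤ n)
    (h1 : ρ ^ (n + 1) = ρ ^ n)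
    (h2 : LinearMap.ker (ρ ^ n) ⊓ LinearMap.ker lam = ⊥)
    (h3 : (ρ ^ n) ∘ₗ lam = lam ∘ₗ (ρ ^ n)) :
    LinearMap.range ρ ⊔ LinearMap.range lam = ⊤ := by
  -- ρ^(n+k) = ρ^n for all k
  have hpow : ∀ k : ℕ, ρ ^ (n + k) = ρ ^ n := by
    intro k
    induction k with
    | zero => rfl
    | succ k ih =>
      rw [← Nat.add_assoc, pow_succ, ih, ← pow_succ, h1]
  have hidem : (ρ ^ n) ∘ₗ (ρ ^ n) = ρ ^ n := by
    have := hpow n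
    rwa [pow_add] at this
  set Kr := LinearMap.ker (ρ ^ n) with hKr
  -- lam maps Kr into Kr
  have hmaps : ∀ x ∈ Kr, lam x ∈ Kr := by
    intro x hx
    have : (ρ ^ n) (lam x) = lam ((ρ ^ n) x) := by
      have := congrArg (fun f => f x) h3
      simpa using this
    have hx' : (ρ ^ n) x = 0 := hx
    show (ρ ^ n) (lam x) = 0
    rw [this, hx', map_zero]
  have f := lam.restrict hmaps
  have hinj : Function.Injective (lam.restrict hmaps) := by
    intro ⟨x, hx⟩ ⟨y, hy⟩ hxy
    have hsub : x - y ∈ Kr ⊓ LinearMap.ker lam := by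
      constructor
      · exact sub_mem hx hy
      · show lam (x - y) = 0
        rw [map_sub, sub_eq_zero]
        exact congrArg Subtype.val hxy
    rw [h2] at hsub
    ext
    exact sub_eq_zero.mp hsub
  have hsurj : Function.Surjective (lam.restrict hmaps) :=
    (LinearMap.injective_iff_surjective).mp hinj
  -- ker(ρ^n) ≤ range lam
  have hker_le : Kr ≤ LinearMap.range lam := by
    intro y hy
    obtain ⟨⟨z, hz⟩, hzy⟩ := hsurj ⟨y, hy⟩
    exact ⟨z, congrArg Subtype.val hzy⟩
  -- range(ρ^n) ≤ range ρ
  have hrange_le : LinearMap.range (ρ ^ n) ≤ LinearMap.range ρ := by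
    rintro _ ⟨x, rfl⟩
    obtain ⟨m, rfl⟩ := Nat.exists_eq_add_of_le hn
    exact ⟨(ρ ^ m) x, by rw [pow_add, pow_one]; rfl⟩
  rw [eq_top_iff]
  intro x _
  have hx1 : (ρ ^ n) x ∈ LinearMap.range ρ := hrange_le ⟨x, rfl⟩
  have hx2 : x - (ρ ^ n) x ∈ Kr := by
    show (ρ ^ n) (x - (ρ ^ n) x) = 0
    have h := congrArg (fun f => f x) hidem
    simp only [LinearMap.comp_apply] at h
    rw [map_sub, h, sub_self]
  have : x = (ρ ^ n) x + (x - (ρ ^ n) x) := by abel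
  rw [this]
  exact Submodule.add_mem_sup hx1 (hker_le hx2)
end

section
/- Let p ≥ 5 be a prime and let I = { A ∈ SL₂(ℚ_p) : A₁₁, A₂₂ ∈ 1 + pℤ_p, A₁₂ ∈ ℤ_p, A₂₁ ∈ pℤ_p }. Then I is torsion-free: the only element of I of finite order is the identity. -/
open Matrix

variable {p : ℕ} [Fact p.Prime]

/-- Chebyshev-like sequence: `M^k = cheb t k • M - cheb t (k-1) • 1` when `M^2 = t•M - 1`. -/
noncomputable def cheb (t : ℤ_[p]) : ℕ → ℤ_[p]
  | 0 => 0
  | 1 => 1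
  | (k+2) => t * cheb t (k+1) - cheb t k

lemma cheb_mod (s : ℤ_[p]) : ∀ k : ℕ, ∃ c : ℤ_[p], cheb (2 + (p:ℤ_[p]) * s) k = (k:ℤ_[p]) + (p:ℤ_[p]) * c
  | 0 => ⟨0, by simp [cheb]⟩
  | 1 => ⟨0, by simp [cheb]⟩
  | (k+2) => by
    obtain ⟨c1, h1⟩ := cheb_mod s (k+1)
    obtain ⟨c0, h0⟩ := cheb_mod s k
    refine ⟨2*c1 - c0 + s*(((k+1:ℕ):ℤ_[p]) + (p:ℤ_[p])*c1), ?_⟩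
    show (2 + (p:ℤ_[p])*s) * cheb (2 + (p:ℤ_[p])*s) (k+1) - cheb (2 + (p:ℤ_[p])*s) k = _
    rw [h1, h0]
    push_cast
    ring

/-- auxiliary integer sequence, `(k^3-k)/6`. -/
def Tseq : ℕ → ℤ
  | 0 => 0
  | 1 => 0
  | (k+2) => 2 * Tseq (k+1) - Tseq k + (k+1)

lemma six_mul_Tseq : ∀ k : ℕ, 6 * Tseq k = (k:ℤ)^3 - k
  | 0 => by simp [Tseq]
  | 1 => by simp [Tseq]
  | (k+2) => by
    have h1 := six_mul_Tseq (k+1)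
    have h0 := six_mul_Tseq k
    show 6 * (2 * Tseq (k+1) - Tseq k + (k+1)) = _
    push_cast
    push_cast at h1 h0
    linear_combination 2 * h1 - h0

lemma cheb_mod_sq (s : ℤ_[p]) :
    ∀ k : ℕ, ∃ c : ℤ_[p], cheb (2 + (p:ℤ_[p]) * s) k = (k:ℤ_[p]) + (p:ℤ_[p]) * s * (Tseq k : ℤ_[p]) + (p:ℤ_[p])^2 * c
  | 0 => ⟨0, by simp [cheb, Tseq]⟩
  | 1 => ⟨0, by simp [cheb, Tseq]⟩
  | (k+2) => by
    obtain ⟨c1, h1⟩ := cheb_mod_sq s (k+1)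
    obtain ⟨c0, h0⟩ := cheb_mod_sq s k
    obtain ⟨c', h'⟩ := cheb_mod s (k+1)
    refine ⟨2*c1 - c0 + s*c', ?_⟩
    have hrec : cheb (2 + (p:ℤ_[p])*s) (k+2)
        = 2 * cheb (2 + (p:ℤ_[p])*s) (k+1) - cheb (2 + (p:ℤ_[p])*s) k + (p:ℤ_[p]) * s * cheb (2 + (p:ℤ_[p])*s) (k+1) := by
      show (2 + (p:ℤ_[p])*s) * cheb (2 + (p:ℤ_[p])*s) (k+1) - cheb (2 + (p:ℤ_[p])*s) k = _
      ring
    rw [hrec]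
    nth_rewrite 2 [h']
    rw [h1, h0]
    have hT : (Tseq (k+2) : ℤ_[p]) = 2 * Tseq (k+1) - Tseq k + (k+1) := by
      show ((2 * Tseq (k+1) - Tseq k + (k+1) : ℤ) : ℤ_[p]) = _
      push_cast
      ring
    rw [hT]
    push_cast
    ring

lemma p_not_unit : ¬ IsUnit (p : ℤ_[p]) := by
  rw [PadicInt.isUnit_iff, PadicInt.norm_p]
  have h2 : (2 : ℝ) ≤ (p : ℝ) := by exact_mod_cast (Fact.out : p.Prime).two_le
  intro h
  have : (p : ℝ) ≤ 1 := by
    rw [← inv_inv (p : ℝ), h]; norm_num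
  linarith

lemma norm_p_lt_one' : ‖(p : ℤ_[p])‖ < 1 := by
  rw [PadicInt.norm_p]
  have h2 : (2 : ℝ) ≤ (p : ℝ) := by exact_mod_cast (Fact.out : p.Prime).two_le
  rw [inv_lt_one_iff₀]
  right; linarith

lemma cheb_p_ne_zero (hp5 : 5 ≤ p) (s : ℤ_[p]) : cheb (2 + (p:ℤ_[p]) * s) p ≠ 0 := by
  obtain ⟨c, hc⟩ := cheb_mod_sq s p
  have hdvd : (p : ℤ) ∣ Tseq p := by
    have h6 : 6 * Tseq p = (p:ℤ)^3 - p := six_mul_Tseq p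
    have hpd : (p : ℤ) ∣ 6 * Tseq p := ⟨(p:ℤ)^2 - 1, by linear_combination h6⟩
    have hcop : IsCoprime (p:ℤ) 6 := by
      have hnd : ¬ (p ∣ 6) := by
        intro hd
        have := Nat.le_of_dvd (by norm_num) hd
        have hpr := (Fact.out : p.Prime)
        interval_cases p
        · norm_num at hd
        · norm_num at hpr
      exact (Nat.Prime.coprime_iff_not_dvd (Fact.out : p.Prime)).mpr hnd |>.isCoprime
    exact hcop.dvd_of_dvd_mul_left hpd
  obtain ⟨u, hu⟩ := hdvd
  intro h0
  rw [h0, hu] at hc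
  have hfac : (p:ℤ_[p]) * (1 + p * (s * u + c)) = 0 := by
    push_cast at hc ⊢
    linear_combination -hc
  have hpne : (p:ℤ_[p]) ≠ 0 := by
    exact_mod_cast Nat.cast_ne_zero.mpr (Fact.out : p.Prime).ne_zero
  have h1 : 1 + (p:ℤ_[p]) * (s * u + c) = 0 := by
    rcases mul_eq_zero.mp hfac with h | h
    · exact absurd h hpne
    · exact h
  exact p_not_unit (isUnit_of_dvd_one ⟨-(s * (u:ℤ_[p]) + c), by linear_combination h1⟩)

lemma cheb_q_ne_zero (q : ℕ) (hq : q.Prime) (hqp : q ≠ p) (s : ℤ_[p]) :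
    cheb (2 + (p:ℤ_[p]) * s) q ≠ 0 := by
  obtain ⟨c, hc⟩ := cheb_mod s q
  intro h0
  rw [h0] at hc
  have hqc : ((q:ℤ) : ℤ_[p]) = (p:ℤ_[p]) * (-c) := by
    push_cast
    linear_combination -hc
  have hplt : ‖(p:ℤ_[p])‖ < 1 := by
    rw [PadicInt.norm_p]
    have h2 : (2 : ℝ) ≤ (p : ℝ) := by exact_mod_cast (Fact.out : p.Prime).two_le
    rw [inv_lt_one_iff₀]
    right; linarith
  have hlt : ‖((q:ℤ) : ℤ_[p])‖ < 1 := by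
    rw [hqc, norm_mul]
    exact lt_of_le_of_lt
      (mul_le_of_le_one_right (norm_nonneg _) (PadicInt.norm_le_one _)) hplt
  rw [PadicInt.norm_int_lt_one_iff_dvd] at hlt
  have : p ∣ q := by exact_mod_cast hlt
  exact hqp (((Nat.prime_dvd_prime_iff_eq (Fact.out : p.Prime) hq).mp this).symm)

/-- The standard pro-`p` Iwahori subgroup of `SL₂(ℚ_p)` (as a set). -/
def Iwahori (p : ℕ) [Fact p.Prime] :
    Set (Matrix.SpecialLinearGroup (Fin 2) ℚ_[p]) :=
  {A | (∃ x : ℤ_[p], (A : Matrix (Fin 2) (Fin 2) ℚ_[p]) 0 0 = 1 + (p : ℚ_[p]) * x) ∧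
       (∃ x : ℤ_[p], (A : Matrix (Fin 2) (Fin 2) ℚ_[p]) 1 1 = 1 + (p : ℚ_[p]) * x) ∧
       (∃ x : ℤ_[p], (A : Matrix (Fin 2) (Fin 2) ℚ_[p]) 0 1 = (x : ℚ_[p])) ∧
       (∃ x : ℤ_[p], (A : Matrix (Fin 2) (Fin 2) ℚ_[p]) 1 0 = (p : ℚ_[p]) * x)}

lemma Iwahori.one_mem : (1 : Matrix.SpecialLinearGroup (Fin 2) ℚ_[p]) ∈ Iwahori p := by
  refine ⟨⟨0, ?_⟩, ⟨0, ?_⟩, ⟨0, ?_⟩, ⟨0, ?_⟩⟩ <;>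
    simp [Matrix.SpecialLinearGroup.coe_one, Matrix.one_apply]

lemma Iwahori.mul_mem {A B : Matrix.SpecialLinearGroup (Fin 2) ℚ_[p]}
    (hA : A ∈ Iwahori p) (hB : B ∈ Iwahori p) : A * B ∈ Iwahori p := by
  obtain ⟨⟨a, ha⟩, ⟨d, hd⟩, ⟨b, hb⟩, ⟨c, hc⟩⟩ := hA
  obtain ⟨⟨a', ha'⟩, ⟨d', hd'⟩, ⟨b', hb'⟩, ⟨c', hc'⟩⟩ := hB
  refine ⟨⟨a + a' + (p:ℤ_[p])*a*a' + b*c', ?_⟩,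
    ⟨c*b' + d + d' + (p:ℤ_[p])*d*d', ?_⟩,
    ⟨(1+(p:ℤ_[p])*a)*b' + b*(1+(p:ℤ_[p])*d'), ?_⟩,
    ⟨c*(1+(p:ℤ_[p])*a') + (1+(p:ℤ_[p])*d)*c', ?_⟩⟩ <;>
  · simp only [Matrix.SpecialLinearGroup.coe_mul, Matrix.mul_apply, Fin.sum_univ_two,
      ha, ha', hd, hd', hb, hb', hc, hc']
    push_cast
    ring

lemma Iwahori.pow_mem {A : Matrix.SpecialLinearGroup (Fin 2) ℚ_[p]}
    (hA : A ∈ Iwahori p) (k : ℕ) : A ^ k ∈ Iwahori p := by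
  induction k with
  | zero => simpa using Iwahori.one_mem
  | succ k ih => rw [pow_succ]; exact Iwahori.mul_mem ih hA

lemma coe_two : ((2:ℤ_[p]):ℚ_[p]) = 2 := by norm_cast

lemma eq_one_of_mem_pow_prime (hp5 : 5 ≤ p) {q : ℕ} (hq : q.Prime)
    {B : Matrix.SpecialLinearGroup (Fin 2) ℚ_[p]} (hB : B ∈ Iwahori p)
    (h : B ^ q = 1) : B = 1 := by
  obtain ⟨⟨x, hx⟩, ⟨y, hy⟩, ⟨b, hb⟩, ⟨w, hw⟩⟩ := hB
  set M : Matrix (Fin 2) (Fin 2) ℚ_[p] := (B : Matrix (Fin 2) (Fin 2) ℚ_[p]) with hM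
  have hdet : M 0 0 * M 1 1 - M 0 1 * M 1 0 = 1 := by
    rw [← Matrix.det_fin_two]; exact B.property
  set t : ℤ_[p] := 2 + (p:ℤ_[p]) * (x + y) with ht
  have htr : M 0 0 + M 1 1 = (t : ℚ_[p]) := by
    rw [hx, hy, ht]; push_cast [coe_two]; ring
  have hCH : M * M = (t : ℚ_[p]) • M - 1 := by
    ext i j
    fin_cases i <;> fin_cases j <;>
      simp only [Matrix.mul_apply, Fin.sum_univ_two, Matrix.sub_apply, Matrix.smul_apply,
        Matrix.one_apply_eq, Matrix.one_apply_ne, smul_eq_mul, Fin.isValue, ne_eq,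
        Fin.zero_eta, Fin.mk_one, zero_ne_one, one_ne_zero, not_false_eq_true, sub_zero]
    · linear_combination M 0 0 * htr - hdet
    · linear_combination M 0 1 * htr
    · linear_combination M 1 0 * htr
    · linear_combination M 1 1 * htr - hdet
  have hpow : ∀ k : ℕ, M ^ (k+1)
      = ((cheb t (k+1) : ℤ_[p]) : ℚ_[p]) • M
        - ((cheb t k : ℤ_[p]) : ℚ_[p]) • (1 : Matrix (Fin 2) (Fin 2) ℚ_[p]) := by
    intro k
    induction k with
    | zero => simp [cheb]
    | succ k ih =>
      have hstep : M ^ (k+2) = M ^ (k+1) * M := by rw [pow_succ]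
      have hch : ((cheb t (k+2) : ℤ_[p]) : ℚ_[p])
          = (t:ℚ_[p]) * ((cheb t (k+1) : ℤ_[p]) : ℚ_[p]) - ((cheb t k : ℤ_[p]) : ℚ_[p]) := by
        show ((t * cheb t (k+1) - cheb t k : ℤ_[p]) : ℚ_[p]) = _
        push_cast [coe_two]; ring
      rw [hstep, ih, sub_mul, smul_mul_assoc, smul_mul_assoc, one_mul, hCH, hch]
      module
  have hMq : M ^ q = 1 := by
    rw [hM, ← Matrix.SpecialLinearGroup.coe_pow, h, Matrix.SpecialLinearGroup.coe_one]
  obtain ⟨k, hk⟩ : ∃ k, q = k + 1 := ⟨q - 1, (Nat.succ_pred_eq_of_pos hq.pos).symm⟩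
  have key : ((cheb t q : ℤ_[p]) : ℚ_[p]) • M - ((cheb t k : ℤ_[p]) : ℚ_[p]) • 1
      = (1 : Matrix (Fin 2) (Fin 2) ℚ_[p]) := by
    have key0 := hpow k
    rw [← hk, hMq] at key0
    exact key0.symm
  have hcne : cheb t q ≠ 0 := by
    rcases eq_or_ne q p with rfl | hqp
    · exact cheb_p_ne_zero hp5 (x+y)
    · exact cheb_q_ne_zero q hq hqp (x+y)
  have hcne' : ((cheb t q : ℤ_[p]) : ℚ_[p]) ≠ 0 := PadicInt.coe_ne_zero.mpr hcne
  have e01 := congrFun (congrFun key 0) 1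
  have e10 := congrFun (congrFun key 1) 0
  have e00 := congrFun (congrFun key 0) 0
  have e11 := congrFun (congrFun key 1) 1
  simp only [Matrix.sub_apply, Matrix.smul_apply, smul_eq_mul, Matrix.one_apply_eq,
    Matrix.one_apply_ne, ne_eq, zero_ne_one, one_ne_zero, not_false_eq_true,
    mul_zero, sub_zero, mul_one] at e01 e10 e00 e11
  have h01 : M 0 1 = 0 := by
    rcases mul_eq_zero.mp e01 with h' | h'
    · exact absurd h' hcne'
    · exact h'
  have h10 : M 1 0 = 0 := by
    rcases mul_eq_zero.mp e10 with h' | h'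
    · exact absurd h' hcne'
    · exact h'
  have hdiag : M 0 0 = M 1 1 := by
    have : ((cheb t q : ℤ_[p]) : ℚ_[p]) * M 0 0 = ((cheb t q : ℤ_[p]) : ℚ_[p]) * M 1 1 := by
      linear_combination e00 - e11
    exact mul_left_cancel₀ hcne' this
  have hsq : M 1 1 * M 1 1 = 1 := by
    have hd := hdet
    rw [h01, h10, hdiag] at hd
    simpa using hd
  have hfac : ((p:ℚ_[p]) * y) * (2 + (p:ℚ_[p]) * y) = 0 := by
    rw [hy] at hsq
    linear_combination hsq
  have h2ne : (2:ℚ_[p]) + (p:ℚ_[p]) * (y:ℚ_[p]) ≠ 0 := by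
    intro h0
    have hlt : ‖((-2 : ℤ) : ℤ_[p])‖ < 1 := by
      have hne : ((-2 : ℤ) : ℤ_[p]) = (p:ℤ_[p]) * y := by
        have hq : (((p:ℤ_[p]) * y : ℤ_[p]) : ℚ_[p]) = (((-2 : ℤ) : ℤ_[p]) : ℚ_[p]) := by
          push_cast [coe_two]
          linear_combination h0
        exact (Subtype.coe_injective hq).symm
      rw [hne, norm_mul]
      exact lt_of_le_of_lt
        (mul_le_of_le_one_right (norm_nonneg _) (PadicInt.norm_le_one _)) norm_p_lt_one'
    rw [PadicInt.norm_int_lt_one_iff_dvd] at hlt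
    have h2d : (p:ℤ) ∣ 2 := (Int.dvd_neg.mp (by exact_mod_cast hlt))
    have := Int.le_of_dvd (by norm_num) h2d
    omega
  have hpy : (p:ℚ_[p]) * y = 0 := by
    rcases mul_eq_zero.mp hfac with h' | h'
    · exact h'
    · exact absurd h' h2ne
  have h11 : M 1 1 = 1 := by rw [hy, hpy, add_zero]
  have h00 : M 0 0 = 1 := by rw [hdiag, h11]
  have hMone : M = 1 := by
    ext i j
    fin_cases i <;> fin_cases j <;>
      simp [h00, h11, h01, h10, Matrix.one_apply]
  exact Subtype.ext (hMone.trans (Matrix.SpecialLinearGroup.coe_one).symm)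

/-- For `p ≥ 5`, the pro-`p` Iwahori subgroup of `SL₂(ℚ_p)` is torsion-free. -/
theorem stmt12 (p : ℕ) [Fact p.Prime] (hp : 5 ≤ p)
    (A : Matrix.SpecialLinearGroup (Fin 2) ℚ_[p]) (hA : A ∈ Iwahori p)
    (h : ∃ n : ℕ, 0 < n ∧ A ^ n = 1) : A = 1 := by
  obtain ⟨n, hn, hAn⟩ := h
  induction n using Nat.strong_induction_on with
  | _ n ih =>
    rcases eq_or_ne n 1 with rfl | hn1
    · simpa using hAn
    · obtain ⟨q, hq, m, rfl⟩ : ∃ q, q.Prime ∧ ∃ m, n = q * m := by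
        obtain ⟨q, hq, hd⟩ := Nat.exists_prime_and_dvd hn1
        exact ⟨q, hq, hd⟩
      have hm : 0 < m := by
        by_contra h0
        push_neg at h0
        interval_cases m
        simp at hn
      have hBq : (A ^ m) ^ q = 1 := by
        rw [← pow_mul, mul_comm]
        exact hAn
      have hB1 : A ^ m = 1 :=
        eq_one_of_mem_pow_prime hp hq (Iwahori.pow_mem hA m) hBq
      exact ih m (by
        have h2 : 2 ≤ q := hq.two_le
        calc m < 2 * m := by omega
        _ ≤ q * m := Nat.mul_le_mul_right m h2) hm hB1
end
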